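/- arXiv:2604.23928 — 2 statements merged into one kernel-verified Lean document; each statement's English description precedes it below -/
import Mathlib

section
/- The function D₁ is a metric on the space 𝔑(S) of finite counting measures on S, and for all μ₁, μ₂ ∈ 𝔑(S) it satisfies D₁(μ₁, μ₂) ≤ (|μ₁| ∨ |μ₂|) · (diam(S) + α). -/
open Metric

noncomputable section

variable {X : Type*} [MetricSpace X]

/-- Cost of a given elementwise pairing of two lists of points. -/
def pairCost (l₁ l₂ : List X) : ℝ := ((l₁.zip l₂).map fun p => dist p.1 p.2).sum

/-- The first-moment Wasserstein matching distance between two finite counting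
measures (encoded as multisets) of equal cardinality: the minimum, over all ways
of pairing the points, of the sum of pairwise distances. -/
def Dw (μ ν : Multiset X) : ℝ :=
  sInf { r : ℝ | ∃ l₁ l₂ : List X, (l₁ : Multiset X) = μ ∧ (l₂ : Multiset X) = ν ∧
    r = pairCost l₁ l₂ }

/-- The distance `D₁` between finite counting measures: the measure with fewer points
is padded with copies of the auxiliary point `sα`, and then the optimal matching cost
is taken. -/
def D1 (sα : X) (μ₁ μ₂ : Multiset X) : ℝ :=
  Dw (μ₁ + Multiset.replicate (μ₂.card - μ₁.card) sα)
     (μ₂ + Multiset.replicate (μ₁.card - μ₂.card) sα)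

/-!
Points are matched by couplings: multisets of pairs with prescribed marginals, the cost of a
coupling being the sum of the distances within its pairs. `Dw` is the least cost of a coupling,
attained because there are only finitely many. Two couplings compose along their common
marginal, and by the triangle inequality in `X` the composite costs at most the sum of the two
costs; this is the triangle inequality for `Dw`. Adding a common point `x` to both sides leaves
`Dw` unchanged: if an optimal coupling pairs `x` with `b`, rerouting around that pair costs at
most `dist x b`. Hence `D₁(μ, ν)` is `Dw` of `μ` and `ν` padded with `sα` to any common size
`N ≥ |μ| ∨ |ν|`, and padding three measures to the same size transfers the triangle inequality.
The bound holds because two points of `S ∪ {sα}` are at distance at most `diam S + α`.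
-/

structure IsCoupling {β : Type*} (P : Multiset (β × β)) (μ ν : Multiset β) : Prop where
  map_fst : P.map Prod.fst = μ
  map_snd : P.map Prod.snd = ν

namespace IsCoupling

variable {β : Type*} {P : Multiset (β × β)} {μ ν : Multiset β}

lemma card_eq (hP : IsCoupling P μ ν) : μ.card = ν.card := by
  rw [← hP.map_fst, ← hP.map_snd, Multiset.card_map, Multiset.card_map]

lemma cons (hP : IsCoupling P μ ν) (x y : β) :
    IsCoupling ((x, y) ::ₘ P) (x ::ₘ μ) (y ::ₘ ν) :=
  ⟨by rw [Multiset.map_cons, hP.map_fst], by rw [Multiset.map_cons, hP.map_snd]⟩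

lemma erase [DecidableEq β] (hP : IsCoupling P μ ν) {x y : β} (hxy : (x, y) ∈ P) :
    IsCoupling (P.erase (x, y)) (μ.erase x) (ν.erase y) :=
  ⟨by rw [Multiset.map_erase_of_mem _ _ hxy, hP.map_fst],
    by rw [Multiset.map_erase_of_mem _ _ hxy, hP.map_snd]⟩

lemma diag (ρ : Multiset β) : IsCoupling (ρ.map fun x => (x, x)) ρ ρ :=
  ⟨by simp, by simp⟩

end IsCoupling

def couplingCost (P : Multiset (X × X)) : ℝ := (P.map fun p => dist p.1 p.2).sum

section Coupling

variable {P Q : Multiset (X × X)} {μ ν ξ : Multiset X}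

lemma couplingCost_nonneg (P : Multiset (X × X)) : 0 ≤ couplingCost P :=
  Multiset.sum_nonneg fun _ hr => by
    obtain ⟨p, -, rfl⟩ := Multiset.mem_map.mp hr
    exact dist_nonneg

@[simp]
lemma couplingCost_zero : couplingCost (0 : Multiset (X × X)) = 0 := rfl

@[simp]
lemma couplingCost_cons (p : X × X) (P : Multiset (X × X)) :
    couplingCost (p ::ₘ P) = dist p.1 p.2 + couplingCost P := by
  simp [couplingCost]

lemma couplingCost_erase [DecidableEq X] {p : X × X} (hp : p ∈ P) :
    couplingCost P = dist p.1 p.2 + couplingCost (P.erase p) := by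
  rw [← couplingCost_cons, Multiset.cons_erase hp]

@[simp]
lemma couplingCost_diag (ρ : Multiset X) : couplingCost (ρ.map fun x => (x, x)) = 0 := by
  simp [couplingCost]

lemma dist_le_couplingCost {p : X × X} (hp : p ∈ P) : dist p.1 p.2 ≤ couplingCost P :=
  Multiset.single_le_sum (fun _ hr => by
    obtain ⟨q, -, rfl⟩ := Multiset.mem_map.mp hr
    exact dist_nonneg) _ (Multiset.mem_map_of_mem _ hp)

lemma IsCoupling.exists_comp (hP : IsCoupling P μ ν) (hQ : IsCoupling Q ν ξ) :
    ∃ R, IsCoupling R μ ξ ∧ couplingCost R ≤ couplingCost P + couplingCost Q := by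
  classical
  obtain ⟨rfl, rfl⟩ := hP
  induction P using Multiset.induction_on generalizing Q ξ with
  | empty =>
    obtain rfl : Q = 0 := by simpa using hQ.map_fst
    obtain rfl : ξ = 0 := by simpa using hQ.map_snd.symm
    exact ⟨0, ⟨by simp, by simp⟩, by simp⟩
  | cons p P ih =>
    obtain ⟨a, b⟩ := p
    have hb : b ∈ Q.map Prod.fst := by simp [hQ.map_fst]
    obtain ⟨⟨b, c⟩, hbc, rfl⟩ := Multiset.mem_map.mp hb
    have hc : c ∈ ξ := hQ.map_snd ▸ Multiset.mem_map_of_mem _ hbc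
    obtain ⟨R, hR, hcost⟩ := ih (by simpa using hQ.erase hbc)
    refine ⟨(a, c) ::ₘ R, by simpa [Multiset.cons_erase hc] using hR.cons a c, ?_⟩
    rw [couplingCost_erase hbc]
    simp only [couplingCost_cons] at hcost ⊢
    linarith [dist_triangle a b c]

end Coupling

lemma pairCost_eq_couplingCost (l₁ l₂ : List X) :
    pairCost l₁ l₂ = couplingCost (l₁.zip l₂ : Multiset (X × X)) := rfl

lemma pairCost_comm (l₁ l₂ : List X) : pairCost l₁ l₂ = pairCost l₂ l₁ := by
  rw [pairCost, ← List.zip_swap, List.map_map, pairCost]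
  simp only [Function.comp_def, Prod.fst_swap, Prod.snd_swap, dist_comm]

section Dw

variable {μ ν ξ : Multiset X}

lemma Dw_le_pairCost {l₁ l₂ : List X} (h₁ : (l₁ : Multiset X) = μ) (h₂ : (l₂ : Multiset X) = ν) :
    Dw μ ν ≤ pairCost l₁ l₂ :=
  csInf_le ⟨0, by
    rintro r ⟨l₁, l₂, -, -, rfl⟩
    exact (pairCost_eq_couplingCost l₁ l₂).trans_ge (couplingCost_nonneg _)⟩ ⟨l₁, l₂, h₁, h₂, rfl⟩

lemma exists_pairCost_eq_Dw (μ ν : Multiset X) : ∃ l₁ l₂ : List X,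
    (l₁ : Multiset X) = μ ∧ (l₂ : Multiset X) = ν ∧ pairCost l₁ l₂ = Dw μ ν := by
  have hfin : ∀ ρ : Multiset X, {l : List X | (l : Multiset X) = ρ}.Finite := fun ρ =>
    ρ.toList.permutations.finite_toSet.subset fun l hl =>
      List.mem_permutations.mpr (Multiset.coe_eq_coe.mp (hl.trans ρ.coe_toList.symm))
  have hne : { r : ℝ | ∃ l₁ l₂ : List X, (l₁ : Multiset X) = μ ∧ (l₂ : Multiset X) = ν ∧
      r = pairCost l₁ l₂ }.Nonempty :=
    ⟨_, μ.toList, ν.toList, μ.coe_toList, ν.coe_toList, rfl⟩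
  obtain ⟨l₁, l₂, h₁, h₂, h⟩ := hne.csInf_mem <| ((hfin μ).image2 pairCost (hfin ν)).subset <| by
    rintro r ⟨l₁, l₂, h₁, h₂, rfl⟩
    exact ⟨l₁, h₁, l₂, h₂, rfl⟩
  exact ⟨l₁, l₂, h₁, h₂, h.symm⟩

lemma Dw_comm (μ ν : Multiset X) : Dw μ ν = Dw ν μ := by
  have key : ∀ μ ν : Multiset X, Dw μ ν ≤ Dw ν μ := fun μ ν => by
    obtain ⟨l₁, l₂, h₁, h₂, h⟩ := exists_pairCost_eq_Dw ν μ
    exact h ▸ pairCost_comm l₁ l₂ ▸ Dw_le_pairCost h₂ h₁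
  exact (key μ ν).antisymm (key ν μ)

lemma Dw_nonneg (μ ν : Multiset X) : 0 ≤ Dw μ ν := by
  obtain ⟨l₁, l₂, -, -, h⟩ := exists_pairCost_eq_Dw μ ν
  exact h ▸ pairCost_eq_couplingCost l₁ l₂ ▸ couplingCost_nonneg _

lemma Dw_le_couplingCost {P : Multiset (X × X)} (hP : IsCoupling P μ ν) :
    Dw μ ν ≤ couplingCost P := by
  obtain ⟨l, rfl⟩ := Quot.exists_rep P
  calc Dw μ ν ≤ pairCost (l.map Prod.fst) (l.map Prod.snd) := Dw_le_pairCost hP.map_fst hP.map_snd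
    _ = couplingCost (l : Multiset (X × X)) := by
      rw [pairCost_eq_couplingCost, List.zip_map', List.map_id'' fun _ => rfl]

lemma exists_couplingCost_eq_Dw (h : μ.card = ν.card) :
    ∃ P, IsCoupling P μ ν ∧ couplingCost P = Dw μ ν := by
  obtain ⟨l₁, l₂, rfl, rfl, hD⟩ := exists_pairCost_eq_Dw μ ν
  have hlen : l₁.length = l₂.length := h
  exact ⟨l₁.zip l₂, ⟨by rw [Multiset.map_coe, List.map_fst_zip hlen.le],
    by rw [Multiset.map_coe, List.map_snd_zip hlen.ge]⟩, hD⟩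

lemma Dw_self (μ : Multiset X) : Dw μ μ = 0 :=
  ((Dw_le_couplingCost (IsCoupling.diag μ)).trans_eq (couplingCost_diag μ)).antisymm
    (Dw_nonneg μ μ)

lemma Dw_eq_zero_iff (h : μ.card = ν.card) : Dw μ ν = 0 ↔ μ = ν := by
  refine ⟨fun h0 => ?_, fun h => h ▸ Dw_self μ⟩
  obtain ⟨P, hP, hcost⟩ := exists_couplingCost_eq_Dw h
  rw [← hP.map_fst, ← hP.map_snd]
  refine Multiset.map_congr rfl fun p hp => dist_le_zero.mp ?_
  exact (dist_le_couplingCost hp).trans (hcost.trans h0).le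

lemma Dw_triangle (h₁ : μ.card = ν.card) (h₂ : ν.card = ξ.card) :
    Dw μ ξ ≤ Dw μ ν + Dw ν ξ := by
  obtain ⟨P, hP, hPcost⟩ := exists_couplingCost_eq_Dw h₁
  obtain ⟨Q, hQ, hQcost⟩ := exists_couplingCost_eq_Dw h₂
  obtain ⟨R, hR, hcost⟩ := hP.exists_comp hQ
  rw [← hPcost, ← hQcost]
  exact (Dw_le_couplingCost hR).trans hcost

lemma Dw_cons_cons_le_dist (x y : X) (ρ : Multiset X) : Dw (x ::ₘ ρ) (y ::ₘ ρ) ≤ dist x y := by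
  simpa using Dw_le_couplingCost ((IsCoupling.diag ρ).cons x y)

lemma Dw_cons_erase_le [DecidableEq X] {x b : X} (hb : b ∈ x ::ₘ ν) :
    Dw ((x ::ₘ ν).erase b) ν ≤ dist x b := by
  obtain rfl | hbx := eq_or_ne b x
  · simp [Dw_self]
  · have hbν : b ∈ ν := (Multiset.mem_cons.mp hb).resolve_left hbx
    rw [Multiset.erase_cons_tail _ hbx.symm]
    conv_lhs => rhs; rw [← Multiset.cons_erase hbν]
    exact Dw_cons_cons_le_dist x b _

lemma Dw_cons_cons (x : X) (h : μ.card = ν.card) : Dw (x ::ₘ μ) (x ::ₘ ν) = Dw μ ν := by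
  classical
  apply le_antisymm
  · obtain ⟨P, hP, hcost⟩ := exists_couplingCost_eq_Dw h
    simpa [hcost] using Dw_le_couplingCost (hP.cons x x)
  · obtain ⟨P, hP, hcost⟩ := exists_couplingCost_eq_Dw (μ := x ::ₘ μ) (ν := x ::ₘ ν) (by simp [h])
    obtain ⟨b, hxb⟩ : ∃ b, (x, b) ∈ P := by
      obtain ⟨⟨x', b⟩, hxb, rfl⟩ := Multiset.mem_map.mp (hP.map_fst ▸ Multiset.mem_cons_self x μ)
      exact ⟨b, hxb⟩
    have hE := hP.erase hxb
    rw [Multiset.erase_cons_head] at hE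
    have hb : b ∈ x ::ₘ ν := hP.map_snd ▸ Multiset.mem_map_of_mem Prod.snd hxb
    calc Dw μ ν ≤ Dw μ ((x ::ₘ ν).erase b) + Dw ((x ::ₘ ν).erase b) ν :=
          Dw_triangle hE.card_eq (by simp [Multiset.card_erase_of_mem hb])
      _ ≤ couplingCost (P.erase (x, b)) + dist x b :=
          add_le_add (Dw_le_couplingCost hE) (Dw_cons_erase_le hb)
      _ = Dw (x ::ₘ μ) (x ::ₘ ν) := by rw [← hcost, couplingCost_erase hxb, add_comm]

lemma Dw_add_replicate (x : X) (k : ℕ) (h : μ.card = ν.card) :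
    Dw (μ + Multiset.replicate k x) (ν + Multiset.replicate k x) = Dw μ ν := by
  induction k with
  | zero => simp
  | succ k ih =>
    simp only [Multiset.replicate_succ, Multiset.add_cons]
    rw [Dw_cons_cons x (by simp [h]), ih]

lemma Dw_le_card_mul {C : ℝ} (h : μ.card = ν.card) (hC : ∀ x ∈ μ, ∀ y ∈ ν, dist x y ≤ C) :
    Dw μ ν ≤ μ.card * C := by
  obtain ⟨P, hP, hcost⟩ := exists_couplingCost_eq_Dw h
  rw [← hcost, ← hP.map_fst, Multiset.card_map, ← nsmul_eq_mul, couplingCost]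
  refine (Multiset.sum_le_card_nsmul _ C ?_).trans_eq (by rw [Multiset.card_map])
  simp only [Multiset.mem_map]
  rintro _ ⟨p, hp, rfl⟩
  exact hC _ (hP.map_fst ▸ Multiset.mem_map_of_mem _ hp) _
    (hP.map_snd ▸ Multiset.mem_map_of_mem _ hp)

end Dw

section D1

variable {sα : X} {μ ν : Multiset X}

lemma D1_eq_Dw_of_card_le {N : ℕ} (hμ : μ.card ≤ N) (hν : ν.card ≤ N) :
    D1 sα μ ν = Dw (μ + Multiset.replicate (N - μ.card) sα)
      (ν + Multiset.replicate (N - ν.card) sα) := by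
  have pad : ∀ ρ : Multiset X, ∀ m, ρ.card + m = max μ.card ν.card →
      ρ + Multiset.replicate (N - ρ.card) sα =
        ρ + Multiset.replicate m sα + Multiset.replicate (N - max μ.card ν.card) sα := by
    intro ρ m hm
    rw [add_assoc, ← Multiset.replicate_add]
    congr 2
    omega
  rw [pad μ (ν.card - μ.card) (by omega), pad ν (μ.card - ν.card) (by omega),
    Dw_add_replicate _ _ (by simp only [Multiset.card_add, Multiset.card_replicate]; omega), D1]

lemma D1_nonneg (sα : X) (μ ν : Multiset X) : 0 ≤ D1 sα μ ν := Dw_nonneg _ _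

lemma D1_comm (sα : X) (μ ν : Multiset X) : D1 sα μ ν = D1 sα ν μ := Dw_comm _ _

lemma D1_triangle (sα : X) (μ ν ξ : Multiset X) : D1 sα μ ξ ≤ D1 sα μ ν + D1 sα ν ξ := by
  set N := max (max μ.card ν.card) ξ.card
  have card_pad : ∀ ρ : Multiset X, ρ.card ≤ N →
      (ρ + Multiset.replicate (N - ρ.card) sα).card = N := fun ρ hρ => by
    rw [Multiset.card_add, Multiset.card_replicate]
    omega
  have hμ : μ.card ≤ N := by omega
  have hν : ν.card ≤ N := by omega
  have hξ : ξ.card ≤ N := by omega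
  rw [D1_eq_Dw_of_card_le hμ hξ, D1_eq_Dw_of_card_le hμ hν, D1_eq_Dw_of_card_le hν hξ]
  exact Dw_triangle ((card_pad μ hμ).trans (card_pad ν hν).symm)
    ((card_pad ν hν).trans (card_pad ξ hξ).symm)

lemma eq_of_add_replicate_eq_add_replicate {β : Type*} {x : β} {μ ν : Multiset β} {m n : ℕ}
    (hμ : x ∉ μ) (hν : x ∉ ν) (h : μ + Multiset.replicate m x = ν + Multiset.replicate n x) :
    μ = ν := by
  classical
  have filter_pad : ∀ ρ : Multiset β, x ∉ ρ → ∀ k,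
      (ρ + Multiset.replicate k x).filter (· ≠ x) = ρ := fun ρ hρ k => by
    rw [Multiset.filter_add, Multiset.filter_eq_self.mpr fun _ ha => ne_of_mem_of_not_mem ha hρ,
      Multiset.filter_eq_nil.mpr fun _ ha => not_not.mpr (Multiset.eq_of_mem_replicate ha),
      add_zero]
  rw [← filter_pad μ hμ m, h, filter_pad ν hν n]

lemma D1_eq_zero_iff (hμ : sα ∉ μ) (hν : sα ∉ ν) : D1 sα μ ν = 0 ↔ μ = ν := by
  rw [D1, Dw_eq_zero_iff (by simp only [Multiset.card_add, Multiset.card_replicate]; omega)]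
  exact ⟨eq_of_add_replicate_eq_add_replicate hμ hν, fun h => h ▸ rfl⟩

lemma dist_le_diam_add_infDist {S : Set X} (hS : Bornology.IsBounded S) {s₀ x y : X}
    (hx : x ∈ insert s₀ S) (hy : y ∈ insert s₀ S) : dist x y ≤ diam S + infDist s₀ S := by
  have h₀ : 0 ≤ diam S + infDist s₀ S := add_nonneg diam_nonneg infDist_nonneg
  rcases hx with rfl | hx <;> rcases hy with rfl | hy
  · simpa using h₀
  · linarith [dist_le_infDist_add_diam (x := x) hS hy]
  · linarith [dist_comm x y, dist_le_infDist_add_diam (x := y) hS hx]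
  · linarith [dist_le_diam_of_mem hS hx hy, infDist_nonneg (x := s₀) (s := S)]

lemma D1_le_max_card_mul {S : Set X} (hS : Bornology.IsBounded S) (hμ : ∀ x ∈ μ, x ∈ S)
    (hν : ∀ x ∈ ν, x ∈ S) :
    D1 sα μ ν ≤ (max μ.card ν.card : ℕ) * (diam S + infDist sα S) := by
  have mem_pad : ∀ ρ : Multiset X, (∀ x ∈ ρ, x ∈ S) → ∀ k,
      ∀ x ∈ ρ + Multiset.replicate k sα, x ∈ insert sα S := fun ρ hρ k x hx => by
    rcases Multiset.mem_add.mp hx with hx | hx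
    · exact Or.inr (hρ x hx)
    · exact Or.inl (Multiset.eq_of_mem_replicate hx)
  refine (Dw_le_card_mul (by simp only [Multiset.card_add, Multiset.card_replicate]; omega)
    fun x hx y hy => dist_le_diam_add_infDist hS (mem_pad μ hμ _ x hx)
      (mem_pad ν hν _ y hy)).trans_eq ?_
  rw [Multiset.card_add, Multiset.card_replicate]
  congr 2
  omega

end D1

theorem stmt0_general (S : Set X) (hS : IsCompact S) (α : ℝ)
    (sα : X) (hsα : sα ∉ S) (hdist : Metric.infDist sα S = α) :
    (∀ μ₁ μ₂ : Multiset X, (∀ x ∈ μ₁, x ∈ S) → (∀ x ∈ μ₂, x ∈ S) →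
      0 ≤ D1 sα μ₁ μ₂ ∧
      (D1 sα μ₁ μ₂ = 0 ↔ μ₁ = μ₂) ∧
      D1 sα μ₁ μ₂ = D1 sα μ₂ μ₁ ∧
      D1 sα μ₁ μ₂ ≤ (max μ₁.card μ₂.card : ℕ) * (Metric.diam S + α)) ∧
    (∀ μ₁ μ₂ μ₃ : Multiset X,
      (∀ x ∈ μ₁, x ∈ S) → (∀ x ∈ μ₂, x ∈ S) → (∀ x ∈ μ₃, x ∈ S) →
      D1 sα μ₁ μ₃ ≤ D1 sα μ₁ μ₂ + D1 sα μ₂ μ₃) := by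
  have not_mem : ∀ ρ : Multiset X, (∀ x ∈ ρ, x ∈ S) → sα ∉ ρ := fun ρ hρ h => hsα (hρ sα h)
  refine ⟨fun μ₁ μ₂ h₁ h₂ => ⟨D1_nonneg sα μ₁ μ₂, D1_eq_zero_iff (not_mem μ₁ h₁) (not_mem μ₂ h₂),
    D1_comm sα μ₁ μ₂, hdist ▸ D1_le_max_card_mul hS.isBounded h₁ h₂⟩,
    fun μ₁ μ₂ μ₃ _ _ _ => D1_triangle sα μ₁ μ₂ μ₃⟩

/-- On a compact metric space `S` (sitting inside an ambient metric
space `X` which also contains the auxiliary point `sα`, at infimum distance `α > 0`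
from `S`), the function `D₁` is a metric on the space `𝔑(S)` of finite counting
measures supported in `S` (nonnegative, zero exactly on the diagonal, symmetric,
satisfying the triangle inequality), and it satisfies the bound
`D₁(μ₁, μ₂) ≤ (|μ₁| ⊔ |μ₂|) * (diam S + α)`. -/
theorem stmt0 (S : Set X) (hS : IsCompact S) (α : ℝ) (hα : 0 < α)
    (sα : X) (hsα : sα ∉ S) (hdist : Metric.infDist sα S = α) :
    (∀ μ₁ μ₂ : Multiset X, (∀ x ∈ μ₁, x ∈ S) → (∀ x ∈ μ₂, x ∈ S) →
      0 ≤ D1 sα μ₁ μ₂ ∧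
      (D1 sα μ₁ μ₂ = 0 ↔ μ₁ = μ₂) ∧
      D1 sα μ₁ μ₂ = D1 sα μ₂ μ₁ ∧
      D1 sα μ₁ μ₂ ≤ (max μ₁.card μ₂.card : ℕ) * (Metric.diam S + α)) ∧
    (∀ μ₁ μ₂ μ₃ : Multiset X,
      (∀ x ∈ μ₁, x ∈ S) → (∀ x ∈ μ₂, x ∈ S) → (∀ x ∈ μ₃, x ∈ S) →
      D1 sα μ₁ μ₃ ≤ D1 sα μ₁ μ₂ + D1 sα μ₂ μ₃) :=
  stmt0_general S hS α sα hsα hdist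
end
end

section
/- Let S = [0,T] with the Euclidean metric and s_α = T + α. Let μ₁ = ∑_{i=1}^n δ_{x_i} and μ₂ = ∑_{i=1}^m δ_{y_i} with n ≤ m, and set μ₁* = μ₁ + ∑_{i=n+1}^m δ_{s_α}. For a counting measure μ with |μ| = m, define F_μ(t) = μ([0,t])/m for t ≥ 0 and let F_μ^{-1}(u) = inf{t ≥ 0 : F_μ(t) ≥ u} for 0 < u < 1. Then D₁(μ₁,μ₂) = m ∫₀¹ |F_{μ₁*}^{-1}(u) − F_{μ₂}^{-1}(u)| du = m ∫₀^∞ |F_{μ₁*}(x) − F_{μ₂}(x)| dx. -/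
/-!
Everything is read off the counting function `N_μ(t) = μ([0, t])`, which is `m F_μ(t)`.
For `a, b ≥ 0` the function `t ↦ |1{a ≤ t} - 1{b ≤ t}|` is the indicator of an interval of
length `|a - b|`, so by the triangle inequality every matching of `μ₁*` with `μ₂` costs at least
`∫₀^∞ |N_{μ₁*} - N_{μ₂}|`. Matching the two sorted lists of points attains this bound: sorted
matchings never cross, so at each `t` all the summands `1{xᵢ ≤ t} - 1{yᵢ ≤ t}` have the same
sign. Finally, on `(i/m, (i+1)/m]` both quantile functions are constant, equal to the `i`-th
smallest points, and integrating them returns the cost of the sorted matching.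
-/

open Metric MeasureTheory

noncomputable section

variable {X : Type*} [MetricSpace X]

open Classical in
/-- `F_μ(t) = μ([0,t])/m`, the cumulative distribution function of the
normalized counting measure `μ/m` on the half line. -/
def Fcdf (μ : Multiset ℝ) (m : ℕ) (t : ℝ) : ℝ :=
  ((μ.filter (fun x => x ∈ Set.Icc (0:ℝ) t)).card : ℝ) / m

/-- `F_μ⁻¹(u) = inf {t ≥ 0 : F_μ(t) ≥ u}`, the corresponding quantile function. -/
def Finv (μ : Multiset ℝ) (m : ℕ) (u : ℝ) : ℝ :=
  sInf {t : ℝ | 0 ≤ t ∧ u ≤ Fcdf μ m t}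


open Set
open scoped Finset

lemma abs_ite_mem_Icc_sub_ite_mem_Icc {a b t : ℝ} (ha : 0 ≤ a) (hb : 0 ≤ b) :
    |(if a ∈ Icc 0 t then (1 : ℝ) else 0) - if b ∈ Icc 0 t then 1 else 0| =
      (Ico (min a b) (max a b)).indicator 1 t := by
  simp only [mem_Icc, ha, hb, true_and, indicator_apply, mem_Ico, min_le_iff, lt_max_iff,
    Pi.one_apply]
  split_ifs <;> norm_num <;> grind

lemma integral_abs_ite_mem_Icc_sub_ite_mem_Icc {a b : ℝ} (ha : 0 ≤ a) (hb : 0 ≤ b) :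
    ∫ t in Ioi 0, |(if a ∈ Icc 0 t then (1 : ℝ) else 0) - if b ∈ Icc 0 t then 1 else 0| =
      |a - b| := by
  rw [← integral_Ici_eq_integral_Ioi,
    funext fun t => abs_ite_mem_Icc_sub_ite_mem_Icc (t := t) ha hb,
    setIntegral_indicator measurableSet_Ico,
    inter_eq_right.2 (Ico_subset_Ici_self.trans (Ici_subset_Ici.2 (le_min ha hb)))]
  simp [Real.volume_real_Ico, max_sub_min_eq_abs, abs_sub_comm]

lemma integrable_abs_ite_mem_Icc_sub_ite_mem_Icc {a b : ℝ} (ha : 0 ≤ a) (hb : 0 ≤ b) :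
    Integrable fun t => |(if a ∈ Icc 0 t then (1 : ℝ) else 0) - if b ∈ Icc 0 t then 1 else 0| := by
  simp_rw [abs_ite_mem_Icc_sub_ite_mem_Icc ha hb]
  exact (integrable_indicator_iff measurableSet_Ico).2 (integrableOn_const measure_Ico_lt_top.ne)

open Classical in
def countIcc (μ : Multiset ℝ) (t : ℝ) : ℝ :=
  ((μ.filter (fun x => x ∈ Icc (0 : ℝ) t)).card : ℝ)

lemma mul_Fcdf_eq_countIcc {μ : Multiset ℝ} {m : ℕ} (h : μ.card = m) (t : ℝ) :
    m * Fcdf μ m t = countIcc μ t := by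
  rcases eq_or_ne m 0 with rfl | hm
  · simp [countIcc, Multiset.card_eq_zero.1 h]
  · exact mul_div_cancel₀ _ (Nat.cast_ne_zero.2 hm)

lemma countIcc_ofFn {k : ℕ} (f : Fin k → ℝ) (t : ℝ) [DecidablePred fun i => f i ∈ Icc 0 t] :
    countIcc (List.ofFn f) t = #{i | f i ∈ Icc 0 t} := by
  classical
  rw [countIcc, ← Fin.univ_val_map, Multiset.filter_map, Multiset.card_map, Finset.card_def,
    Finset.filter_val]
  congr

lemma pairCost_ofFn {k : ℕ} (f g : Fin k → ℝ) :
    pairCost (List.ofFn f) (List.ofFn g) = ∑ i, |f i - g i| := by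
  induction k with
  | zero => simp [pairCost]
  | succ k ih =>
    rw [List.ofFn_succ, List.ofFn_succ, Fin.sum_univ_succ, ← ih]
    simp [pairCost, Real.dist_eq]

lemma abs_sum_ite_mem_Icc_sub_of_monotone {ι : Type*} [Fintype ι] [LinearOrder ι] {f g : ι → ℝ}
    (hf : Monotone f) (hg : Monotone g) (hf₀ : ∀ i, 0 ≤ f i) (hg₀ : ∀ i, 0 ≤ g i) (t : ℝ) :
    |∑ i, ((if f i ∈ Icc 0 t then (1 : ℝ) else 0) - if g i ∈ Icc 0 t then 1 else 0)| =
      ∑ i, |(if f i ∈ Icc 0 t then (1 : ℝ) else 0) - if g i ∈ Icc 0 t then 1 else 0| := by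
  have no_crossing : ∀ i j, f i ∈ Icc 0 t → g i ∉ Icc 0 t → g j ∈ Icc 0 t → f j ∈ Icc 0 t := by
    intro i j hfi hgi hgj
    rcases le_total i j with hij | hji
    · exact absurd ⟨hg₀ i, (hg hij).trans hgj.2⟩ hgi
    · exact ⟨hf₀ j, (hf hji).trans hfi.2⟩
  by_cases h : ∃ i, f i ∈ Icc 0 t ∧ g i ∉ Icc 0 t
  · obtain ⟨i, hfi, hgi⟩ := h
    have hnonneg (j) :
        0 ≤ (if f j ∈ Icc 0 t then (1 : ℝ) else 0) - if g j ∈ Icc 0 t then 1 else 0 := by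
      have := no_crossing i j hfi hgi
      split_ifs <;> simp_all
    rw [Finset.abs_sum_of_nonneg fun j _ => hnonneg j]
    exact Finset.sum_congr rfl fun j _ => (abs_of_nonneg (hnonneg j)).symm
  · push Not at h
    have hnonpos (j) :
        (if f j ∈ Icc 0 t then (1 : ℝ) else 0) - (if g j ∈ Icc 0 t then 1 else 0) ≤ 0 := by
      have := h j
      split_ifs <;> simp_all
    rw [← abs_neg, ← Finset.sum_neg_distrib,
      Finset.abs_sum_of_nonneg fun j _ => neg_nonneg.2 (hnonpos j)]
    exact Finset.sum_congr rfl fun j _ => (abs_of_nonpos (hnonpos j)).symm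

section Matching

variable {k : ℕ} (f g : Fin k → ℝ)

lemma countIcc_ofFn_sub (t : ℝ) :
    countIcc (List.ofFn f) t - countIcc (List.ofFn g) t =
      ∑ i, ((if f i ∈ Icc 0 t then (1 : ℝ) else 0) - if g i ∈ Icc 0 t then 1 else 0) := by
  rw [countIcc_ofFn, countIcc_ofFn, Finset.natCast_card_filter, Finset.natCast_card_filter,
    Finset.sum_sub_distrib]

variable {f g} (hf₀ : ∀ i, 0 ≤ f i) (hg₀ : ∀ i, 0 ≤ g i)
include hf₀ hg₀

lemma integrableOn_sum_abs_ite_mem_Icc_sub :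
    IntegrableOn (fun t => ∑ i,
      |(if f i ∈ Icc 0 t then (1 : ℝ) else 0) - if g i ∈ Icc 0 t then 1 else 0|) (Ioi 0) :=
  integrable_finsetSum _ fun i _ =>
    (integrable_abs_ite_mem_Icc_sub_ite_mem_Icc (hf₀ i) (hg₀ i)).integrableOn

lemma integral_sum_abs_ite_mem_Icc_sub :
    ∫ t in Ioi 0, ∑ i, |(if f i ∈ Icc 0 t then (1 : ℝ) else 0) - if g i ∈ Icc 0 t then 1 else 0| =
      ∑ i, |f i - g i| := by
  rw [integral_finsetSum _ fun i _ =>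
    (integrable_abs_ite_mem_Icc_sub_ite_mem_Icc (hf₀ i) (hg₀ i)).integrableOn]
  exact Finset.sum_congr rfl fun i _ => integral_abs_ite_mem_Icc_sub_ite_mem_Icc (hf₀ i) (hg₀ i)

lemma integral_abs_countIcc_ofFn_sub_le :
    ∫ t in Ioi 0, |countIcc (List.ofFn f) t - countIcc (List.ofFn g) t| ≤ ∑ i, |f i - g i| := by
  rw [← integral_sum_abs_ite_mem_Icc_sub hf₀ hg₀]
  refine integral_mono_of_nonneg (.of_forall fun t => abs_nonneg _)
    (integrableOn_sum_abs_ite_mem_Icc_sub hf₀ hg₀) (.of_forall fun t => ?_)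
  simpa only [countIcc_ofFn_sub] using Finset.abs_sum_le_sum_abs _ _

lemma integral_abs_countIcc_ofFn_sub_of_monotone (hf : Monotone f) (hg : Monotone g) :
    ∫ t in Ioi 0, |countIcc (List.ofFn f) t - countIcc (List.ofFn g) t| = ∑ i, |f i - g i| := by
  simp_rw [countIcc_ofFn_sub, abs_sum_ite_mem_Icc_sub_of_monotone hf hg hf₀ hg₀]
  exact integral_sum_abs_ite_mem_Icc_sub hf₀ hg₀

end Matching

lemma List.exists_ofFn_eq {α : Type*} {k : ℕ} (l : List α) (h : l.length = k) :
    ∃ f : Fin k → α, List.ofFn f = l := by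
  subst h
  exact ⟨l.get, List.ofFn_get l⟩

lemma Multiset.exists_monotone_ofFn_eq {α : Type*} [LinearOrder α] {m : ℕ} (μ : Multiset α)
    (h : μ.card = m) : ∃ f : Fin m → α, Monotone f ∧ (List.ofFn f : Multiset α) = μ := by
  obtain ⟨f, hf⟩ := (μ.sort (· ≤ ·)).exists_ofFn_eq (by rw [Multiset.length_sort, h])
  refine ⟨f, List.sortedLE_ofFn_iff.1 ?_, by rw [hf, Multiset.sort_eq]⟩
  rw [hf]
  exact (μ.pairwise_sort _).sortedLE

lemma integral_abs_countIcc_sub_le_pairCost {l₁ l₂ : List ℝ} (h : l₁.length = l₂.length)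
    (h₁ : ∀ a ∈ l₁, 0 ≤ a) (h₂ : ∀ a ∈ l₂, 0 ≤ a) :
    ∫ t in Ioi 0, |countIcc l₁ t - countIcc l₂ t| ≤ pairCost l₁ l₂ := by
  generalize hk : l₂.length = k at h
  obtain ⟨f, rfl⟩ := l₁.exists_ofFn_eq h
  obtain ⟨g, rfl⟩ := l₂.exists_ofFn_eq hk
  rw [pairCost_ofFn]
  exact integral_abs_countIcc_ofFn_sub_le (fun i => h₁ _ (by simp)) (fun i => h₂ _ (by simp))

lemma Dw_eq_integral_abs_countIcc_sub {μ ν : Multiset ℝ} (h : μ.card = ν.card)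
    (hμ : ∀ a ∈ μ, 0 ≤ a) (hν : ∀ a ∈ ν, 0 ≤ a) :
    Dw μ ν = ∫ t in Ioi 0, |countIcc μ t - countIcc ν t| := by
  refine IsLeast.csInf_eq ⟨?_, ?_⟩
  · generalize hm : ν.card = m at h
    obtain ⟨f, hf, rfl⟩ := μ.exists_monotone_ofFn_eq h
    obtain ⟨g, hg, rfl⟩ := ν.exists_monotone_ofFn_eq hm
    refine ⟨_, _, rfl, rfl, ?_⟩
    rw [pairCost_ofFn, integral_abs_countIcc_ofFn_sub_of_monotone (fun i => hμ _ (by simp))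
      (fun i => hν _ (by simp)) hf hg]
  · rintro _ ⟨l₁, l₂, rfl, rfl, rfl⟩
    exact integral_abs_countIcc_sub_le_pairCost (by simpa using h) (by simpa using hμ)
      (by simpa using hν)

section Quantile

variable {m : ℕ} {f : Fin m → ℝ} (hf : Monotone f) (hf₀ : ∀ i, 0 ≤ f i)
include hf

include hf₀ in
lemma le_card_filter_mem_Icc_of_le (i : Fin m) {t : ℝ} (ht : f i ≤ t) :
    (i : ℕ) + 1 ≤ #{j | f j ∈ Icc 0 t} := by
  rw [← Fin.card_Iic]
  exact Finset.card_le_card fun j hj =>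
    Finset.mem_filter.2 ⟨Finset.mem_univ j, hf₀ j, (hf (Finset.mem_Iic.1 hj)).trans ht⟩

lemma card_filter_mem_Icc_le_of_lt (i : Fin m) {t : ℝ} (ht : t < f i) :
    #{j | f j ∈ Icc 0 t} ≤ i := by
  rw [← Fin.card_Iio]
  exact Finset.card_le_card fun j hj => Finset.mem_Iio.2 <| lt_of_not_ge fun hij =>
    (ht.trans_le (hf hij)).not_ge (Finset.mem_filter.1 hj).2.2

include hf₀ in
lemma Finv_ofFn_of_mem_Ioc (i : Fin m) {u : ℝ}
    (hu : u ∈ Ioc ((i : ℕ) / (m : ℝ)) (((i : ℕ) + 1) / m)) :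
    Finv (List.ofFn f) m u = f i := by
  classical
  have hm : (0 : ℝ) < m := by exact_mod_cast i.pos
  refine IsLeast.csInf_eq ⟨⟨hf₀ i, hu.2.trans ?_⟩, fun t ⟨_, hut⟩ => ?_⟩
  · rw [Fcdf, ← countIcc, countIcc_ofFn]
    gcongr
    exact_mod_cast le_card_filter_mem_Icc_of_le hf hf₀ i le_rfl
  · by_contra! hti
    rw [Fcdf, ← countIcc, countIcc_ofFn] at hut
    have : ((#{j | f j ∈ Icc 0 t} : ℕ) : ℝ) ≤ (i : ℕ) := by
      exact_mod_cast card_filter_mem_Icc_le_of_lt hf i hti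
    have := hut.trans (div_le_div_of_nonneg_right this hm.le)
    linarith [hu.1]

end Quantile

lemma mul_integral_Ioo_zero_one_of_eqOn_Ioc {m : ℕ} {φ : ℝ → ℝ} (c : Fin m → ℝ)
    (h : ∀ i : Fin m, EqOn φ (fun _ => c i) (Ioc ((i : ℕ) / (m : ℝ)) (((i : ℕ) + 1) / m))) :
    m * ∫ u in Ioo 0 1, φ u = ∑ i, c i := by
  rcases Nat.eq_zero_or_pos m with rfl | hm
  · simp
  have hm' : (0 : ℝ) < m := by exact_mod_cast hm
  have hle (k : ℕ) : (k : ℝ) / m ≤ ((k : ℝ) + 1) / m := by gcongr; simp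
  have integrable_piece (i : Fin m) :
      IntervalIntegrable φ volume ((i : ℕ) / (m : ℝ)) (((i : ℕ) + 1) / m) := by
    rw [intervalIntegrable_iff_integrableOn_Ioc_of_le (hle i)]
    exact (integrableOn_const measure_Ioc_lt_top.ne).congr_fun (h i).symm measurableSet_Ioc
  have integral_piece (i : Fin m) :
      ∫ u in ((i : ℕ) / (m : ℝ))..(((i : ℕ) + 1) / m), φ u = c i / m := by
    rw [intervalIntegral.integral_of_le (hle i), setIntegral_congr_fun measurableSet_Ioc (h i),
      setIntegral_const, Real.volume_real_Ioc, add_div, add_sub_cancel_left,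
      max_eq_left (by positivity), smul_eq_mul, one_div_mul_eq_div]
  have adjacent := intervalIntegral.sum_integral_adjacent_intervals (f := φ) (μ := volume)
    (a := fun k : ℕ => (k : ℝ) / m) (n := m) fun k hk => by
      simpa only [Nat.cast_succ] using integrable_piece ⟨k, hk⟩
  simp only [Nat.cast_zero, zero_div, div_self hm'.ne', Nat.cast_succ] at adjacent
  rw [← integral_Ioc_eq_integral_Ioo, ← intervalIntegral.integral_of_le zero_le_one, ← adjacent,
    Finset.sum_range, Finset.mul_sum]
  exact Finset.sum_congr rfl fun i _ => by rw [integral_piece i, mul_div_cancel₀ _ hm'.ne']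

lemma D1_of_card_le (s : X) {μ₁ μ₂ : Multiset X} (h : μ₁.card ≤ μ₂.card) :
    D1 s μ₁ μ₂ = Dw (μ₁ + Multiset.replicate (μ₂.card - μ₁.card) s) μ₂ := by
  rw [D1, Nat.sub_eq_zero_of_le h, Multiset.replicate_zero, add_zero]

lemma mul_integral_abs_Fcdf_sub {μ ν : Multiset ℝ} {m : ℕ} (hμ : μ.card = m) (hν : ν.card = m)
    (s : Set ℝ) :
    m * ∫ t in s, |Fcdf μ m t - Fcdf ν m t| = ∫ t in s, |countIcc μ t - countIcc ν t| := by
  rw [← integral_const_mul]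
  congr with t
  rw [← mul_Fcdf_eq_countIcc hμ, ← mul_Fcdf_eq_countIcc hν, ← mul_sub, abs_mul, Nat.abs_cast]

/-- For `S = [0,T]` with the Euclidean metric and `s_α = T + α`,
and counting measures `μ₁ = ∑_{i=1}^n δ_{x_i}`, `μ₂ = ∑_{i=1}^m δ_{y_i}` with `n ≤ m`,
letting `μ₁* = μ₁ + ∑_{i=n+1}^m δ_{s_α}`, the distance `D₁(μ₁, μ₂)` equals
`m ∫₀¹ |F_{μ₁*}⁻¹(u) − F_{μ₂}⁻¹(u)| du` and also `m ∫₀^∞ |F_{μ₁*}(x) − F_{μ₂}(x)| dx`. -/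
theorem stmt1 (T α : ℝ) (hT : 0 ≤ T) (hα : 0 < α) (n m : ℕ) (hnm : n ≤ m)
    (x : Fin n → ℝ) (y : Fin m → ℝ)
    (hx : ∀ i, x i ∈ Set.Icc 0 T) (hy : ∀ i, y i ∈ Set.Icc 0 T) :
    D1 (T + α) (↑(List.ofFn x) : Multiset ℝ) (↑(List.ofFn y) : Multiset ℝ) =
      m * ∫ u in Set.Ioo (0:ℝ) 1,
        |Finv ((↑(List.ofFn x) : Multiset ℝ) + Multiset.replicate (m - n) (T + α)) m u -
          Finv (↑(List.ofFn y) : Multiset ℝ) m u| ∧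
    D1 (T + α) (↑(List.ofFn x) : Multiset ℝ) (↑(List.ofFn y) : Multiset ℝ) =
      m * ∫ t in Set.Ioi (0:ℝ),
        |Fcdf ((↑(List.ofFn x) : Multiset ℝ) + Multiset.replicate (m - n) (T + α)) m t -
          Fcdf (↑(List.ofFn y) : Multiset ℝ) m t| := by
  set μ : Multiset ℝ := ↑(List.ofFn x) + Multiset.replicate (m - n) (T + α)
  set ν : Multiset ℝ := ↑(List.ofFn y)
  have hμ : μ.card = m := by
    simp only [μ, Multiset.card_add, Multiset.coe_card, List.length_ofFn, Multiset.card_replicate]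
    omega
  have hν : ν.card = m := by simp [ν]
  have hμ₀ : ∀ a ∈ μ, 0 ≤ a := by
    simp only [μ, Multiset.mem_add, Multiset.mem_coe, List.mem_ofFn, Multiset.mem_replicate]
    rintro a (⟨i, rfl⟩ | ⟨-, rfl⟩)
    exacts [(hx i).1, by linarith]
  have hν₀ : ∀ a ∈ ν, 0 ≤ a := by
    simp only [ν, Multiset.mem_coe, List.mem_ofFn]
    rintro a ⟨i, rfl⟩
    exact (hy i).1
  have hD : D1 (T + α) (List.ofFn x) ν = ∫ t in Ioi 0, |countIcc μ t - countIcc ν t| := by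
    rw [D1_of_card_le _ (by simpa [ν] using hnm), hν, Multiset.coe_card, List.length_ofFn]
    exact Dw_eq_integral_abs_countIcc_sub (hμ.trans hν.symm) hμ₀ hν₀
  refine ⟨?_, by rw [hD, mul_integral_abs_Fcdf_sub hμ hν]⟩
  obtain ⟨f, hf, hfμ⟩ := μ.exists_monotone_ofFn_eq hμ
  obtain ⟨g, hg, hgν⟩ := ν.exists_monotone_ofFn_eq hν
  have hf₀ : ∀ i, 0 ≤ f i := fun i => hμ₀ _ (hfμ ▸ by simp)
  have hg₀ : ∀ i, 0 ≤ g i := fun i => hν₀ _ (hgν ▸ by simp)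
  rw [hD, ← hfμ, ← hgν, integral_abs_countIcc_ofFn_sub_of_monotone hf₀ hg₀ hf hg]
  exact (mul_integral_Ioo_zero_one_of_eqOn_Ioc _ fun i u hu => by
    simp only [Finv_ofFn_of_mem_Ioc hf hf₀ i hu, Finv_ofFn_of_mem_Ioc hg hg₀ i hu]).symm
end
end
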